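/- Let β_A, β_H > 0, α_A, α_H > 0 with α_H·β_A − α_A·β_H ≠ 0, let λ ∈ (0,1) and ω₀ ≥ 1. Set p_L := α_A^λ·α_H^{1−λ}, q_L := β_A^λ·β_H^{1−λ} and B_n^L := exp( a_n^{(q_L)}·ω₀ + Σ_{k=1}^{n} b_k^{(p_L,q_L)} ). Then: (a) B_1^L = exp( (q_L − β_λ)·ω₀ + (p_L − α_λ) ) < 1, and B_n^L < H_{λ,n} for all n ≥ 1; (b) the sequence (B_n^L)_{n≥1} is strictly decreasing; (c) lim_{n→∞} B_n^L = 0; (d) lim_{n→∞} (1/n)·log B_n^L = (p_L/q_L)·(x₀^{(q_L)} + β_λ) − α_λ, where in the case β_A = β_H (in which q_L = β_λ) one sets x₀^{(q_L)} := 0. -/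

import Mathlib

open Real Filter

/-- One transition weight of the Poisson Galton–Watson process with immigration:
probability that the next generation size is `y` given the previous size is `x`. -/
noncomputable def gwStep (β α : ℝ) (x y : ℕ) : ℝ :=
  Real.exp (-(β * (x : ℝ) + α)) * (β * (x : ℝ) + α) ^ y / (Nat.factorial y : ℝ)

/-- The `n`-step path law (pmf on `Fin n → ℕ`) with initial generation size `ω₀`. -/
noncomputable def gwPath (β α : ℝ) (ω₀ n : ℕ) (ω : Fin n → ℕ) : ℝ :=
  ∏ k : Fin n,
    gwStep β α
      (if (k : ℕ) = 0 then ω₀ else ω ⟨(k : ℕ) - 1, Nat.lt_of_le_of_lt (Nat.sub_le _ _) k.2⟩)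
      (ω k)

/-- Hellinger integral of order `lam` between the `n`-step path laws. -/
noncomputable def hellinger (βA αA βH αH lam : ℝ) (ω₀ n : ℕ) : ℝ :=
  ∑' ω : Fin n → ℕ, gwPath βA αA ω₀ n ω ^ lam * gwPath βH αH ω₀ n ω ^ (1 - lam)

/-- The recursion `a₀ = 0`, `a_{n+1} = q·e^{a_n} − βl`. -/
noncomputable def aSeq (q βl : ℝ) : ℕ → ℝ
  | 0 => 0
  | n + 1 => q * Real.exp (aSeq q βl n) - βl

/-- The recursion `b₀ = 0`, `b_{n+1} = p·e^{a_n} − αl`. -/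
noncomputable def bSeq (p q βl αl : ℝ) : ℕ → ℝ
  | 0 => 0
  | n + 1 => p * Real.exp (aSeq q βl n) - αl

/-!
The Hellinger integral is the total mass of the path products of the kernel
`g(x, y) = gwStep βA αA x y ^ λ * gwStep βH αH x y ^ (1 - λ)`, a Poisson weight of mean
`m(x) = f_A(x)^λ f_H(x)^(1-λ)` damped by `exp (-f_λ(x))`, so that
`∑_y g(x, y) e^{t y} = exp (m(x) e^t - f_λ(x))`. Hölder's inequality gives `m(x) ≥ q_L x + p_L`,
strictly for `x ≥ 1` because `(β_A, α_A)` and `(β_H, α_H)` are not proportional. Inserting the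
bound `exp (a_n y + ∑_{k ≤ n} b_k)` for the `n`-step mass into one more step reproduces it with
`n + 1`, which is exactly the recursion for `a` and `b`. The exponents `a_n` decrease to the
negative fixed point `x₀` of `x ↦ q_L e^x - β_λ` (or stay `0` if `β_A = β_H`), so
`b_n → p_L e^{x₀} - α_λ < 0`, and a Cesàro average gives the rate.
-/

open Finset

theorem rpow_mul_rpow_lt_of_ne {a b w : ℝ} (ha : 0 ≤ a) (hb : 0 ≤ b) (hw₀ : 0 < w) (hw₁ : w < 1)
    (hab : a ≠ b) : a ^ w * b ^ (1 - w) < w * a + (1 - w) * b :=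
  (geom_mean_lt_arith_mean2_weighted_iff_of_pos hw₀ (sub_pos.2 hw₁) ha hb (by ring)).2 hab

/- Rescale both columns to total `1`; the rows then compare by weighted AM-GM, strictly in the
first one because `a / (a + b) ≠ c / (c + d)`. -/
theorem rpow_mul_rpow_add_rpow_mul_rpow_lt {a b c d w : ℝ} (ha : 0 < a) (hb : 0 < b)
    (hc : 0 < c) (hd : 0 < d) (hw₀ : 0 < w) (hw₁ : w < 1) (had : a * d ≠ b * c) :
    a ^ w * c ^ (1 - w) + b ^ w * d ^ (1 - w) < (a + b) ^ w * (c + d) ^ (1 - w) := by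
  set s := a + b
  set t := c + d
  have hs : 0 < s := by positivity
  have ht : 0 < t := by positivity
  have scale : ∀ u v : ℝ, 0 ≤ u → 0 ≤ v →
      u ^ w * v ^ (1 - w) = (u / s) ^ w * (v / t) ^ (1 - w) * (s ^ w * t ^ (1 - w)) := by
    intro u v hu hv
    rw [div_rpow hu hs.le, div_rpow hv ht.le]
    field_simp
  have hlt : (a / s) ^ w * (c / t) ^ (1 - w) < w * (a / s) + (1 - w) * (c / t) := by
    refine rpow_mul_rpow_lt_of_ne (by positivity) (by positivity) hw₀ hw₁ ?_
    rw [Ne, div_eq_div_iff hs.ne' ht.ne']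
    contrapose! had
    linear_combination had
  have hle : (b / s) ^ w * (d / t) ^ (1 - w) ≤ w * (b / s) + (1 - w) * (d / t) :=
    geom_mean_le_arith_mean2_weighted hw₀.le (by linarith) (by positivity) (by positivity)
      (by ring)
  have hone : w * (a / s) + (1 - w) * (c / t) + (w * (b / s) + (1 - w) * (d / t)) = 1 := by
    field_simp
    ring
  rw [scale a c ha.le hc.le, scale b d hb.le hd.le, ← add_mul]
  calc _ < (w * (a / s) + (1 - w) * (c / t) + (w * (b / s) + (1 - w) * (d / t))) *
          (s ^ w * t ^ (1 - w)) :=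
        mul_lt_mul_of_pos_right (add_lt_add_of_lt_of_le hlt hle) (by positivity)
    _ = s ^ w * t ^ (1 - w) := by rw [hone, one_mul]

theorem mul_add_lt_rpow_mul_rpow {βA βH αA αH w x : ℝ} (hβA : 0 < βA) (hβH : 0 < βH)
    (hαA : 0 < αA) (hαH : 0 < αH) (hw₀ : 0 < w) (hw₁ : w < 1) (hγ : αH * βA - αA * βH ≠ 0)
    (hx : 0 < x) :
    βA ^ w * βH ^ (1 - w) * x + αA ^ w * αH ^ (1 - w) <
      (βA * x + αA) ^ w * (βH * x + αH) ^ (1 - w) := by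
  have hslope : (βA * x) ^ w * (βH * x) ^ (1 - w) = βA ^ w * βH ^ (1 - w) * x := by
    rw [mul_rpow hβA.le hx.le, mul_rpow hβH.le hx.le]
    calc _ = βA ^ w * βH ^ (1 - w) * (x ^ w * x ^ (1 - w)) := by ring
      _ = _ := by rw [← rpow_add hx, add_sub_cancel, rpow_one]
  rw [← hslope]
  refine rpow_mul_rpow_add_rpow_mul_rpow_lt (by positivity) hαA (by positivity) hαH hw₀ hw₁ ?_
  contrapose! hγ
  have : (αH * βA - αA * βH) * x = 0 := by linear_combination hγ
  simpa [hx.ne'] using this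

section PathProd

variable {α : Type*} (K : α → α → ℝ)

/-- The weight of the path `x → ω 0 → ⋯ → ω (n - 1)`, indexed as in `gwPath`, so that
`gwPath β α = pathProd (gwStep β α)` holds by definition. -/
noncomputable def pathProd (x : α) (n : ℕ) (ω : Fin n → α) : ℝ :=
  ∏ k : Fin n,
    K (if (k : ℕ) = 0 then x else ω ⟨(k : ℕ) - 1, Nat.lt_of_le_of_lt (Nat.sub_le _ _) k.2⟩) (ω k)

theorem pathProd_cons (x y : α) {n : ℕ} (ω : Fin n → α) :
    pathProd K x (n + 1) (Fin.cons y ω) = K x y * pathProd K y n ω := by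
  rw [pathProd, Fin.prod_univ_succ]
  congr 1
  refine prod_congr rfl fun ⟨i, _⟩ _ => ?_
  cases i <;> rfl

variable {K}

theorem pathProd_nonneg (hK : ∀ x y, 0 ≤ K x y) (x : α) {n : ℕ} (ω : Fin n → α) :
    0 ≤ pathProd K x n ω :=
  prod_nonneg fun _ _ => hK _ _

theorem hasSum_pathProd_succ (hK : ∀ x y, 0 ≤ K x y) {x : α} (hKx : Summable (K x)) {n : ℕ}
    {T : α → ℝ} (hT : ∀ y, HasSum (pathProd K y n) (T y)) (hT1 : ∀ y, T y ≤ 1) :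
    HasSum (pathProd K x (n + 1)) (∑' y, K x y * T y) := by
  set F : α × (Fin n → α) → ℝ := fun p => K x p.1 * pathProd K p.1 n p.2
  have hfiber : ∀ y, HasSum (fun ω => F (y, ω)) (K x y * T y) := fun y => (hT y).mul_left _
  have hrow : Summable fun y => K x y * T y := by
    refine hKx.of_nonneg_of_le (fun y => ?_) fun y => mul_le_of_le_one_right (hK _ _) (hT1 y)
    exact mul_nonneg (hK _ _) (hasSum_le (fun ω => pathProd_nonneg hK _ _) hasSum_zero (hT y))
  have hF0 : 0 ≤ F := fun p => mul_nonneg (hK _ _) (pathProd_nonneg hK _ _)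
  have hF : Summable F :=
    (summable_prod_of_nonneg hF0).2
      ⟨fun y => (hfiber y).summable, by simpa only [(hfiber _).tsum_eq] using hrow⟩
  have hsum : HasSum F (∑' y, K x y * T y) := by
    convert hF.hasSum using 1
    rw [hF.tsum_prod' fun y => (hfiber y).summable]
    exact tsum_congr fun y => (hfiber y).tsum_eq.symm
  rw [← (Fin.consEquiv fun _ => α).hasSum_iff]
  convert hsum using 1
  ext p
  exact pathProd_cons K x p.1 p.2

theorem summable_mul_tsum_pathProd (hK : ∀ x y, 0 ≤ K x y) {x : α} (hKx : Summable (K x))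
    {n : ℕ} (h1 : ∀ y, ∑' ω, pathProd K y n ω ≤ 1) :
    Summable fun y => K x y * ∑' ω, pathProd K y n ω :=
  hKx.of_nonneg_of_le
    (fun _ => mul_nonneg (hK _ _) (tsum_nonneg fun _ => pathProd_nonneg hK _ _))
    fun y => mul_le_of_le_one_right (hK _ _) (h1 y)

theorem summable_pathProd_and_tsum_le_one (hK : ∀ x y, 0 ≤ K x y)
    (hK1 : ∀ x, Summable (K x) ∧ ∑' y, K x y ≤ 1) (n : ℕ) (x : α) :
    Summable (pathProd K x n) ∧ ∑' ω, pathProd K x n ω ≤ 1 := by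
  induction n generalizing x with
  | zero => exact ⟨.of_finite, by simp [pathProd]⟩
  | succ n ih =>
    have h := hasSum_pathProd_succ hK (hK1 x).1 (fun y => (ih y).1.hasSum) fun y => (ih y).2
    refine ⟨h.summable, h.tsum_eq ▸ le_trans ?_ (hK1 x).2⟩
    exact (summable_mul_tsum_pathProd hK (hK1 x).1 fun y => (ih y).2).tsum_le_tsum
      (fun y => mul_le_of_le_one_right (hK _ _) (ih y).2) (hK1 x).1

theorem tsum_pathProd_succ (hK : ∀ x y, 0 ≤ K x y)
    (hK1 : ∀ x, Summable (K x) ∧ ∑' y, K x y ≤ 1) (n : ℕ) (x : α) :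
    ∑' ω, pathProd K x (n + 1) ω = ∑' y, K x y * ∑' ω, pathProd K y n ω :=
  (hasSum_pathProd_succ hK (hK1 x).1
    (fun y => (summable_pathProd_and_tsum_le_one hK hK1 n y).1.hasSum)
    fun y => (summable_pathProd_and_tsum_le_one hK hK1 n y).2).tsum_eq

end PathProd

section Recursion

variable {p q β α x₀ : ℝ}

theorem aSeq_succ_le (hq : 0 ≤ q) (hqβ : q ≤ β) (n : ℕ) : aSeq q β (n + 1) ≤ aSeq q β n := by
  induction n with
  | zero => simpa [aSeq] using hqβ
  | succ n ih => exact sub_le_sub_right (mul_le_mul_of_nonneg_left (exp_le_exp.2 ih) hq) β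

theorem aSeq_succ_lt (hq : 0 < q) (hqβ : q < β) (n : ℕ) : aSeq q β (n + 1) < aSeq q β n := by
  induction n with
  | zero => simpa [aSeq] using hqβ
  | succ n ih => exact sub_lt_sub_right (mul_lt_mul_of_pos_left (exp_lt_exp.2 ih) hq) β

theorem aSeq_nonpos (hq : 0 ≤ q) (hqβ : q ≤ β) (n : ℕ) : aSeq q β n ≤ 0 :=
  antitone_nat_of_succ_le (aSeq_succ_le hq hqβ) n.zero_le

theorem aSeq_self (β : ℝ) : aSeq β β = 0 := by
  ext n
  induction n with
  | zero => rfl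
  | succ n ih => simp [aSeq, ih]

/- By convexity of `exp`, on `[x₀, 0]` the map `x ↦ q e^x - β` lies below its chord from
`(x₀, x₀)` to `(0, q - β)`, and that chord lies below the diagonal since `q - β < 0`. -/
theorem mul_exp_sub_lt_of_fixedPoint_lt (hq : 0 ≤ q) (hqβ : q < β)
    (hfix : q * exp x₀ - β = x₀) {x : ℝ} (hx₀x : x₀ < x) (hx : x < 0) : q * exp x - β < x := by
  set t := x / x₀
  have hx₀ : x₀ < 0 := hx₀x.trans hx
  have ht₀ : 0 < t := div_pos_of_neg_of_neg hx hx₀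
  have ht₁ : t < 1 := (div_lt_one_of_neg hx₀).2 hx₀x
  have hxt : x = t * x₀ := by simp [t, div_mul_cancel₀ x hx₀.ne]
  have hconv : exp x ≤ t * exp x₀ + (1 - t) * exp 0 := by
    simpa [smul_eq_mul, ← hxt] using
      convexOn_exp.2 (Set.mem_univ x₀) (Set.mem_univ 0) ht₀.le (by linarith) (by ring)
  rw [exp_zero, mul_one] at hconv
  nlinarith [mul_le_mul_of_nonneg_left hconv hq]

theorem tendsto_aSeq_fixedPoint (hq : 0 < q) (hqβ : q < β) (hx₀ : x₀ < 0)
    (hfix : q * exp x₀ - β = x₀) : Tendsto (aSeq q β) atTop (nhds x₀) := by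
  have hanti : Antitone (aSeq q β) := antitone_nat_of_succ_le (aSeq_succ_le hq.le hqβ.le)
  have hlow : ∀ n, x₀ ≤ aSeq q β n := by
    intro n
    induction n with
    | zero => exact hx₀.le
    | succ n ih =>
      exact hfix ▸ sub_le_sub_right (mul_le_mul_of_nonneg_left (exp_le_exp.2 ih) hq.le) β
  obtain ⟨ℓ, hℓ⟩ : ∃ ℓ, Tendsto (aSeq q β) atTop (nhds ℓ) :=
    ⟨_, tendsto_atTop_ciInf hanti ⟨x₀, by rintro _ ⟨n, rfl⟩; exact hlow n⟩⟩
  have hℓfix : q * exp ℓ - β = ℓ :=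
    tendsto_nhds_unique ((((continuous_exp.tendsto ℓ).comp hℓ).const_mul q).sub_const β)
      (hℓ.comp (tendsto_add_atTop_nat 1))
  have hℓneg : ℓ < 0 := (hanti.le_of_tendsto hℓ 1).trans_lt (by simpa [aSeq] using hqβ)
  rcases (ge_of_tendsto' hℓ hlow).eq_or_lt with rfl | hlt
  · exact hℓ
  · exact absurd hℓfix (mul_exp_sub_lt_of_fixedPoint_lt hq.le hqβ hfix hlt hℓneg).ne

theorem sum_Icc_bSeq (p q β α : ℝ) (n : ℕ) :
    ∑ k ∈ Icc 1 n, bSeq p q β α k = ∑ i ∈ range n, (p * exp (aSeq q β i) - α) := by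
  induction n with
  | zero => rfl
  | succ n ih => rw [sum_Icc_succ_top (by omega), ih, sum_range_succ]; rfl

theorem aSeq_succ_mul_add_sum_bSeq (x : ℝ) (n : ℕ) :
    aSeq q β (n + 1) * x + ∑ k ∈ Icc 1 (n + 1), bSeq p q β α k =
      (q * x + p) * exp (aSeq q β n) - (β * x + α) + ∑ k ∈ Icc 1 n, bSeq p q β α k := by
  rw [sum_Icc_succ_top (by omega)]
  simp only [aSeq, bSeq]
  ring

theorem aSeq_succ_mul_add_sum_bSeq_lt (hq : 0 < q) (hqβ : q ≤ β) (hp : 0 ≤ p)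
    (hpα : p ≤ α) (hstrict : q < β ∨ p < α) {x : ℝ} (hx : 0 < x) (n : ℕ) :
    aSeq q β (n + 1) * x + ∑ k ∈ Icc 1 (n + 1), bSeq p q β α k <
      aSeq q β n * x + ∑ k ∈ Icc 1 n, bSeq p q β α k := by
  have hb : p * exp (aSeq q β n) ≤ p :=
    mul_le_of_le_one_right hp (exp_le_one_iff.2 (aSeq_nonpos hq.le hqβ n))
  rw [sum_Icc_succ_top (by omega)]
  show aSeq q β (n + 1) * x + (_ + (p * exp (aSeq q β n) - α)) < _
  rcases hstrict with hlt | hlt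
  · linarith [mul_lt_mul_of_pos_right (aSeq_succ_lt hq hlt n) hx]
  · linarith [mul_le_mul_of_nonneg_right (aSeq_succ_le hq.le hqβ n) hx.le]

theorem tendsto_atBot_of_tendsto_one_div_mul {u : ℕ → ℝ} {L : ℝ} (hL : L < 0)
    (h : Tendsto (fun n : ℕ => 1 / (n : ℝ) * u n) atTop (nhds L)) : Tendsto u atTop atBot := by
  refine (tendsto_natCast_atTop_atTop.atTop_mul_neg hL h).congr' ?_
  filter_upwards [eventually_ge_atTop 1] with n hn
  have : (n : ℝ) ≠ 0 := by positivity
  field_simp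

theorem tendsto_one_div_mul_aSeq_mul_add_sum_bSeq (hA : Tendsto (aSeq q β) atTop (nhds x₀))
    (x : ℝ) :
    Tendsto (fun n : ℕ => 1 / (n : ℝ) * (aSeq q β n * x + ∑ k ∈ Icc 1 n, bSeq p q β α k))
      atTop (nhds (p * exp x₀ - α)) := by
  have hb := ((((continuous_exp.tendsto x₀).comp hA).const_mul p).sub_const α).cesaro
  have ha := (tendsto_const_div_atTop_nhds_zero_nat (1 : ℝ)).mul (hA.mul_const x)
  simpa only [mul_add, sum_Icc_bSeq, zero_mul, zero_add, one_div, Function.comp_apply] using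
    ha.add hb

end Recursion

structure IsDampedPoissonKernel (K : ℕ → ℕ → ℝ) (m : ℕ → ℝ) (β α : ℝ) : Prop where
  nonneg : ∀ x y, 0 ≤ K x y
  hasSum_mul_exp : ∀ x t,
    HasSum (fun y : ℕ => K x y * exp (t * y)) (exp (m x * exp t - (β * x + α)))

namespace IsDampedPoissonKernel

variable {K : ℕ → ℕ → ℝ} {m : ℕ → ℝ} {p q β α : ℝ}

theorem summable_and_tsum_le_one (hK : IsDampedPoissonKernel K m β α)
    (hmβ : ∀ x : ℕ, m x ≤ β * x + α) (x : ℕ) : Summable (K x) ∧ ∑' y, K x y ≤ 1 := by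
  have h := hK.hasSum_mul_exp x 0
  simp only [zero_mul, exp_zero, mul_one] at h
  exact ⟨h.summable, h.tsum_eq ▸ exp_le_one_iff.2 (sub_nonpos.2 (hmβ x))⟩

theorem exp_le_tsum_pathProd_succ (hK : IsDampedPoissonKernel K m β α)
    (hmβ : ∀ x : ℕ, m x ≤ β * x + α) {n : ℕ} {t c : ℝ}
    (hlow : ∀ y : ℕ, exp (t * y + c) ≤ ∑' ω, pathProd K y n ω) (x : ℕ) :
    exp (m x * exp t - (β * x + α) + c) ≤ ∑' ω, pathProd K x (n + 1) ω := by
  have hK1 := hK.summable_and_tsum_le_one hmβ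
  rw [tsum_pathProd_succ hK.nonneg hK1, exp_add, ← (hK.hasSum_mul_exp x t).tsum_eq,
    ← tsum_mul_right]
  refine Summable.tsum_le_tsum (fun y => ?_) ((hK.hasSum_mul_exp x t).summable.mul_right _)
    (summable_mul_tsum_pathProd hK.nonneg (hK1 x).1 fun y =>
      (summable_pathProd_and_tsum_le_one hK.nonneg hK1 n y).2)
  rw [mul_assoc, ← exp_add]
  exact mul_le_mul_of_nonneg_left (hlow y) (hK.nonneg x y)

theorem exp_aSeq_mul_add_sum_bSeq_le_tsum_pathProd (hK : IsDampedPoissonKernel K m β α)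
    (hmβ : ∀ x : ℕ, m x ≤ β * x + α) (hm : ∀ x : ℕ, q * x + p ≤ m x) (n x : ℕ) :
    exp (aSeq q β n * x + ∑ k ∈ Icc 1 n, bSeq p q β α k) ≤ ∑' ω, pathProd K x n ω := by
  induction n generalizing x with
  | zero => simp [aSeq, pathProd]
  | succ n ih =>
    refine (hK.exp_le_tsum_pathProd_succ hmβ ih x).trans' (exp_le_exp.2 ?_)
    rw [aSeq_succ_mul_add_sum_bSeq]
    gcongr
    exact hm x

theorem exp_aSeq_mul_add_sum_bSeq_lt_tsum_pathProd (hK : IsDampedPoissonKernel K m β α)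
    (hmβ : ∀ x : ℕ, m x ≤ β * x + α) (hm : ∀ x : ℕ, q * x + p ≤ m x) {x : ℕ}
    (hmx : q * x + p < m x) (n : ℕ) :
    exp (aSeq q β (n + 1) * x + ∑ k ∈ Icc 1 (n + 1), bSeq p q β α k) <
      ∑' ω, pathProd K x (n + 1) ω := by
  refine (hK.exp_le_tsum_pathProd_succ hmβ
    (hK.exp_aSeq_mul_add_sum_bSeq_le_tsum_pathProd hmβ hm n) x).trans_lt' (exp_lt_exp.2 ?_)
  rw [aSeq_succ_mul_add_sum_bSeq]
  gcongr

end IsDampedPoissonKernel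

theorem hasSum_mul_pow_div_factorial (c r : ℝ) :
    HasSum (fun y : ℕ => c * r ^ y / y.factorial) (c * exp r) := by
  simpa only [mul_div_assoc, ← Real.exp_eq_exp_ℝ] using
    (NormedSpace.expSeries_div_hasSum_exp r).mul_left c

theorem poissonWeight_rpow_mul_rpow {a b w : ℝ} (ha : 0 ≤ a) (hb : 0 ≤ b) (y : ℕ) :
    (exp (-a) * a ^ y / y.factorial) ^ w * (exp (-b) * b ^ y / y.factorial) ^ (1 - w) =
      exp (-(w * a + (1 - w) * b)) * (a ^ w * b ^ (1 - w)) ^ y / y.factorial := by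
  have hy : (0 : ℝ) < y.factorial := by positivity
  have hfac : (y.factorial : ℝ) ^ w * (y.factorial : ℝ) ^ (1 - w) = y.factorial := by
    rw [← rpow_add hy, add_sub_cancel, rpow_one]
  have hexp : exp (-a * w) * exp (-b * (1 - w)) = exp (-(w * a + (1 - w) * b)) := by
    rw [← exp_add]; ring_nf
  rw [div_rpow (by positivity) hy.le, div_rpow (by positivity) hy.le,
    mul_rpow (exp_nonneg _) (by positivity), mul_rpow (exp_nonneg _) (by positivity),
    ← exp_mul, ← exp_mul, mul_pow, ← rpow_natCast a, ← rpow_natCast b, ← rpow_mul ha,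
    ← rpow_mul hb, ← rpow_mul_natCast ha, ← rpow_mul_natCast hb, mul_comm (y : ℝ) w,
    mul_comm (y : ℝ) (1 - w), div_mul_div_comm, hfac, ← hexp]
  ring

theorem gwStep_nonneg {β α : ℝ} (hβ : 0 ≤ β) (hα : 0 ≤ α) (x y : ℕ) : 0 ≤ gwStep β α x y := by
  unfold gwStep
  positivity

section Hellinger

variable {βA βH αA αH lam : ℝ}

noncomputable def hellingerKernel (βA αA βH αH lam : ℝ) (x y : ℕ) : ℝ :=
  gwStep βA αA x y ^ lam * gwStep βH αH x y ^ (1 - lam)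

theorem hellinger_eq_tsum_pathProd (hβA : 0 ≤ βA) (hβH : 0 ≤ βH) (hαA : 0 ≤ αA)
    (hαH : 0 ≤ αH) (ω₀ n : ℕ) :
    hellinger βA αA βH αH lam ω₀ n =
      ∑' ω, pathProd (hellingerKernel βA αA βH αH lam) ω₀ n ω := by
  refine tsum_congr fun ω => ?_
  rw [gwPath, gwPath, ← finsetProd_rpow _ _ (fun _ _ => gwStep_nonneg hβA hαA _ _),
    ← finsetProd_rpow _ _ (fun _ _ => gwStep_nonneg hβH hαH _ _), ← prod_mul_distrib]
  rfl

theorem isDampedPoissonKernel_hellingerKernel (hβA : 0 ≤ βA) (hβH : 0 ≤ βH) (hαA : 0 ≤ αA)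
    (hαH : 0 ≤ αH) :
    IsDampedPoissonKernel (hellingerKernel βA αA βH αH lam)
      (fun x => (βA * x + αA) ^ lam * (βH * x + αH) ^ (1 - lam))
      (lam * βA + (1 - lam) * βH) (lam * αA + (1 - lam) * αH) where
  nonneg x y := mul_nonneg (rpow_nonneg (gwStep_nonneg hβA hαA x y) _)
    (rpow_nonneg (gwStep_nonneg hβH hαH x y) _)
  hasSum_mul_exp x t := by
    have ha : 0 ≤ βA * x + αA := by positivity
    have hb : 0 ≤ βH * x + αH := by positivity
    convert hasSum_mul_pow_div_factorial
      (exp (-(lam * (βA * x + αA) + (1 - lam) * (βH * x + αH))))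
      ((βA * x + αA) ^ lam * (βH * x + αH) ^ (1 - lam) * exp t) using 1
    · ext y
      rw [hellingerKernel, gwStep, gwStep, poissonWeight_rpow_mul_rpow ha hb, mul_comm t,
        exp_nat_mul, mul_pow]
      ring
    · rw [← exp_add]
      ring_nf

theorem exp_aSeq_mul_add_sum_bSeq_lt_hellinger (hβA : 0 < βA) (hβH : 0 < βH) (hαA : 0 < αA)
    (hαH : 0 < αH) (hγ : αH * βA - αA * βH ≠ 0) (hlam₀ : 0 < lam) (hlam₁ : lam < 1) {ω₀ : ℕ}
    (hω₀ : 1 ≤ ω₀) (n : ℕ) :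
    exp (aSeq (βA ^ lam * βH ^ (1 - lam)) (lam * βA + (1 - lam) * βH) (n + 1) * ω₀ +
        ∑ k ∈ Icc 1 (n + 1), bSeq (αA ^ lam * αH ^ (1 - lam)) (βA ^ lam * βH ^ (1 - lam))
          (lam * βA + (1 - lam) * βH) (lam * αA + (1 - lam) * αH) k) <
      hellinger βA αA βH αH lam ω₀ (n + 1) := by
  have hmβ : ∀ x : ℕ, (βA * x + αA) ^ lam * (βH * x + αH) ^ (1 - lam) ≤
      (lam * βA + (1 - lam) * βH) * x + (lam * αA + (1 - lam) * αH) := fun x => by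
    linarith [geom_mean_le_arith_mean2_weighted hlam₀.le (sub_nonneg.2 hlam₁.le)
      (by positivity : 0 ≤ βA * x + αA) (by positivity : 0 ≤ βH * x + αH) (by ring)]
  have hm : ∀ x : ℕ, 0 < x → βA ^ lam * βH ^ (1 - lam) * x + αA ^ lam * αH ^ (1 - lam) <
      (βA * x + αA) ^ lam * (βH * x + αH) ^ (1 - lam) := fun x hx =>
    mul_add_lt_rpow_mul_rpow hβA hβH hαA hαH hlam₀ hlam₁ hγ (by exact_mod_cast hx)
  rw [hellinger_eq_tsum_pathProd hβA.le hβH.le hαA.le hαH.le]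
  refine (isDampedPoissonKernel_hellingerKernel hβA.le hβH.le hαA.le hαH.le)
    |>.exp_aSeq_mul_add_sum_bSeq_lt_tsum_pathProd hmβ (fun x => ?_) (hm ω₀ hω₀) n
  rcases x.eq_zero_or_pos with rfl | hx
  · simp
  · exact (hm x hx).le

end Hellinger

/-- Detailed behaviour of the recursive lower bounds
`B_n^L = exp(a_n^{(q_L)}·ω₀ + Σ_{k=1}^n b_k^{(p_L,q_L)})` with
`p_L = α_A^λ·α_H^{1−λ}`, `q_L = β_A^λ·β_H^{1−λ}`:  value and `< 1` at `n = 1`, lower bound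
for the Hellinger integral, strict decrease, vanishing limit, and exponential decay rate,
where `x₀` is the unique negative fixed point of `x ↦ q_L·e^x − β_λ` if `β_A ≠ β_H`,
and `x₀ := 0` if `β_A = β_H`. -/
theorem hellinger_lower_bound_detailed (βA βH αA αH lam : ℝ)
    (hβA : 0 < βA) (hβH : 0 < βH) (hαA : 0 < αA) (hαH : 0 < αH)
    (hγ : αH * βA - αA * βH ≠ 0)
    (hlam : lam ∈ Set.Ioo (0 : ℝ) 1) (ω₀ : ℕ) (hω₀ : 1 ≤ ω₀)
    (βl αl pL qL : ℝ)
    (hβl : βl = lam * βA + (1 - lam) * βH) (hαl : αl = lam * αA + (1 - lam) * αH)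
    (hpL : pL = αA ^ lam * αH ^ (1 - lam)) (hqL : qL = βA ^ lam * βH ^ (1 - lam))
    (B : ℕ → ℝ)
    (hB : ∀ n : ℕ,
      B n = Real.exp (aSeq qL βl n * (ω₀ : ℝ) + ∑ k ∈ Finset.Icc 1 n, bSeq pL qL βl αl k))
    (x₀ : ℝ)
    (hx₀ : (βA ≠ βH ∧ x₀ < 0 ∧ qL * Real.exp x₀ - βl = x₀) ∨ (βA = βH ∧ x₀ = 0)) :
    (B 1 = Real.exp ((qL - βl) * (ω₀ : ℝ) + (pL - αl)) ∧ B 1 < 1) ∧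
    (∀ n : ℕ, 1 ≤ n → B n < hellinger βA αA βH αH lam ω₀ n) ∧
    (∀ n : ℕ, 1 ≤ n → B (n + 1) < B n) ∧
    Tendsto B atTop (nhds 0) ∧
    Tendsto (fun n : ℕ => (1 / (n : ℝ)) * Real.log (B n)) atTop
      (nhds ((pL / qL) * (x₀ + βl) - αl)) := by
  obtain ⟨hl0, hl1⟩ := hlam
  have hq : 0 < qL := hqL ▸ by positivity
  have hp : 0 < pL := hpL ▸ by positivity
  have hqβ : qL ≤ βl := hqL ▸ hβl ▸
    geom_mean_le_arith_mean2_weighted hl0.le (by linarith) hβA.le hβH.le (by ring)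
  have hpα : pL ≤ αl := hpL ▸ hαl ▸
    geom_mean_le_arith_mean2_weighted hl0.le (by linarith) hαA.le hαH.le (by ring)
  obtain ⟨hA, hfix, hstrict, hneg⟩ : Tendsto (aSeq qL βl) atTop (nhds x₀) ∧
      qL * exp x₀ - βl = x₀ ∧ (qL < βl ∨ pL < αl) ∧ pL * exp x₀ - αl < 0 := by
    rcases hx₀ with ⟨hne, hx₀, hfix⟩ | ⟨rfl, rfl⟩
    · have hqβ' : qL < βl := hqL ▸ hβl ▸ rpow_mul_rpow_lt_of_ne hβA.le hβH.le hl0 hl1 hne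
      refine ⟨tendsto_aSeq_fixedPoint hq hqβ' hx₀ hfix, hfix, .inl hqβ', ?_⟩
      nlinarith [exp_lt_one_iff.2 hx₀]
    · have hqβl : qL = βl := by rw [hqL, hβl, ← rpow_add hβA, add_sub_cancel, rpow_one]; ring
      subst hqβl
      simpa [aSeq_self] using ⟨tendsto_const_nhds, hpL ▸ hαl ▸ rpow_mul_rpow_lt_of_ne hαA.le
        hαH.le hl0 hl1 (by rintro rfl; exact hγ (by ring))⟩
  have hdec : ∀ n, B (n + 1) < B n := fun n => by
    rw [hB, hB]
    exact exp_lt_exp.2 (aSeq_succ_mul_add_sum_bSeq_lt hq hqβ hp.le hpα hstrict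
      (by exact_mod_cast hω₀) n)
  have hrate := tendsto_one_div_mul_aSeq_mul_add_sum_bSeq (p := pL) (α := αl) hA ω₀
  refine ⟨⟨by simp [hB, aSeq, bSeq], (hdec 0).trans_eq (by simp [hB, aSeq])⟩, fun n hn => ?_,
    fun n _ => hdec n, ?_, ?_⟩
  · obtain ⟨n, rfl⟩ := Nat.exists_eq_add_of_le' hn
    subst hβl hαl hpL hqL
    exact hB _ ▸ exp_aSeq_mul_add_sum_bSeq_lt_hellinger hβA hβH hαA hαH hγ hl0 hl1 hω₀ n
  · exact (tendsto_exp_atBot.comp (tendsto_atBot_of_tendsto_one_div_mul hneg hrate)).congr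
      fun n => (hB n).symm
  · rw [show pL / qL * (x₀ + βl) = pL * exp x₀ by
      rw [show x₀ + βl = qL * exp x₀ by linarith]; field_simp]
    simpa only [hB, log_exp] using hrate
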